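/- Local complementation at a vertex x does not change the cut-rank of any vertex subset: for every X ⊆ V(G), the GF(2)-rank of A_{G*x}[X, V\X] equals the GF(2)-rank of A_G[X, V\X]. -/

import Mathlib

/-!
Off the diagonal, the GF(2) adjacency matrix of `G * x` is `A + a aᵀ`, where `a` is the column of
`x` in `A = A_G`; hence `A_{G*x}[X, V∖X] = A[X, V∖X] + u vᵀ` with `u`, `v` the restrictions of `a`.
If `x ∈ X`, then `vᵀ` is row `x` of the cut matrix and `u x = 0` (no loops), so the update is
left multiplication by the unipotent matrix `1 + u e_xᵀ`; if `x ∉ X`, then symmetrically `u` is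
column `x` and `v x = 0`, and the update is a unipotent column operation. Neither changes the rank.
-/

open scoped Classical

variable {V : Type*} [Fintype V] [DecidableEq V]

/-- GF(2)-rank of the adjacency submatrix `A_G[X, V \ X]`. -/
noncomputable def cutrk (G : SimpleGraph V) (X : Finset V) : ℕ :=
  (Matrix.of fun (a : X) (b : (Xᶜ : Finset V)) =>
    if G.Adj a.1 b.1 then (1 : ZMod 2) else 0).rank

/-- The cutrank of a linear ordering of the vertices. -/
noncomputable def ordCutrk (G : SimpleGraph V) (e : Fin (Fintype.card V) ≃ V) : ℕ :=
  Finset.univ.sup fun i : Fin (Fintype.card V) => cutrk G ((Finset.Iic i).image e)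

/-- Linear rank-width: minimum cutrank over all linear orderings of the vertices. -/
noncomputable def lrw (G : SimpleGraph V) : ℕ :=
  ⨅ e : Fin (Fintype.card V) ≃ V, ordCutrk G e

/-- Local complementation at a vertex `x`: toggle all edges among the neighbours of `x`. -/
def localComplement (G : SimpleGraph V) (x : V) : SimpleGraph V where
  Adj a b :=
    (G.Adj a b ∧ ¬(G.Adj x a ∧ G.Adj x b)) ∨
    (¬ G.Adj a b ∧ a ≠ b ∧ G.Adj x a ∧ G.Adj x b)
  symm := by
    constructor
    intro a b h
    rcases h with ⟨hab, hn⟩ | ⟨hn, hne, hxa, hxb⟩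
    · exact Or.inl ⟨hab.symm, fun h => hn ⟨h.2, h.1⟩⟩
    · exact Or.inr ⟨fun h => hn h.symm, hne.symm, hxb, hxa⟩
  loopless := by
    constructor
    intro a h
    rcases h with ⟨hab, _⟩ | ⟨_, hne, _⟩
    · exact G.loopless.irrefl a hab
    · exact hne rfl


namespace Matrix

variable {m n R : Type*} [CommRing R]

theorem det_one_add_vecMulVec [Fintype n] [DecidableEq n] (u v : n → R) :
    (1 + vecMulVec u v).det = 1 + v ⬝ᵥ u := by
  rw [vecMulVec_eq Unit, det_one_add_replicateCol_mul_replicateRow]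

theorem add_vecMulVec_col_eq_mul [Fintype n] [DecidableEq n] (M : Matrix m n R) (v : n → R)
    (j : n) : M + vecMulVec (M.col j) v = M * (1 + vecMulVec (Pi.single j 1) v) := by
  rw [Matrix.mul_add, Matrix.mul_one, mul_vecMulVec, mulVec_single_one]

theorem add_vecMulVec_row_eq_mul [Fintype m] [DecidableEq m] (M : Matrix m n R) (u : m → R)
    (i : m) : M + vecMulVec u (M.row i) = (1 + vecMulVec u (Pi.single i 1)) * M := by
  rw [Matrix.add_mul, Matrix.one_mul, vecMulVec_mul, single_one_vecMul]

theorem rank_add_vecMulVec_col [Fintype n] [DecidableEq n] (M : Matrix m n R) {v : n → R}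
    {j : n} (hv : v j = 0) : (M + vecMulVec (M.col j) v).rank = M.rank := by
  rw [add_vecMulVec_col_eq_mul, rank_mul_eq_left_of_isUnit_det]
  simp [det_one_add_vecMulVec, hv]

theorem rank_add_vecMulVec_row [Fintype m] [DecidableEq m] [Fintype n] (M : Matrix m n R)
    {u : m → R} {i : m} (hu : u i = 0) : (M + vecMulVec u (M.row i)).rank = M.rank := by
  rw [add_vecMulVec_row_eq_mul, rank_mul_eq_right_of_isUnit_det]
  simp [det_one_add_vecMulVec, hu]

end Matrix

open Matrix

omit [Fintype V] in
theorem adjMatrix_localComplement_apply (G : SimpleGraph V) (x : V) {a b : V} (hab : a ≠ b) :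
    (localComplement G x).adjMatrix (ZMod 2) a b =
      G.adjMatrix (ZMod 2) a b + G.adjMatrix (ZMod 2) x a * G.adjMatrix (ZMod 2) x b := by
  by_cases h : G.Adj a b <;> by_cases hxa : G.Adj x a <;> by_cases hxb : G.Adj x b <;>
    simp [localComplement, h, hxa, hxb, hab]
  decide

theorem cutrk_eq_rank_submatrix (G : SimpleGraph V) (X : Finset V) :
    cutrk G X = ((G.adjMatrix (ZMod 2)).submatrix (↑) (↑) : Matrix X (Xᶜ : Finset V) _).rank :=
  rfl

theorem submatrix_adjMatrix_localComplement (G : SimpleGraph V) (x : V) (X : Finset V) :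
    ((localComplement G x).adjMatrix (ZMod 2)).submatrix ((↑) : X → V)
        ((↑) : (Xᶜ : Finset V) → V) =
      (G.adjMatrix (ZMod 2)).submatrix (↑) (↑) +
        vecMulVec (fun a : X => G.adjMatrix (ZMod 2) x a)
          (fun b : (Xᶜ : Finset V) => G.adjMatrix (ZMod 2) x b) := by
  ext a b
  exact adjMatrix_localComplement_apply G x fun h => Finset.mem_compl.mp b.2 (h ▸ a.2)

theorem stmt5 (G : SimpleGraph V) (x : V) (X : Finset V) :
    cutrk (localComplement G x) X = cutrk G X := by
  rw [cutrk_eq_rank_submatrix, cutrk_eq_rank_submatrix, submatrix_adjMatrix_localComplement]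
  have hxx : G.adjMatrix (ZMod 2) x x = 0 := by simp
  by_cases hx : x ∈ X
  · exact rank_add_vecMulVec_row (u := fun a : X => G.adjMatrix (ZMod 2) x a) (i := ⟨x, hx⟩) _
      hxx
  · have hcol : (fun a : X => G.adjMatrix (ZMod 2) x a) =
        ((G.adjMatrix (ZMod 2)).submatrix ((↑) : X → V) ((↑) : (Xᶜ : Finset V) → V)).col
          ⟨x, Finset.mem_compl.mpr hx⟩ :=
      funext fun a => G.isSymm_adjMatrix.apply a x
    rw [hcol]
    exact rank_add_vecMulVec_col _ hxx
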